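/- Suppose U | A, X has a matrix normal distribution MN_{n×D}(Λ, Ω, Ψ) and y | U, A, X ~ N((I − ρA)⁻¹(Uγ + Xβ), σ²(I − ρA)⁻¹(I − ρAᵀ)⁻¹). Then marginally y | A, X ~ N((I − ρA)⁻¹(Λγ + Xβ), (I − ρA)⁻¹(γᵀΨγ · Ω + σ²I)(I − ρAᵀ)⁻¹). -/

import Mathlib

open Matrix MeasureTheory ProbabilityTheory

/-- The characteristic function of the multivariate normal `N(m, C)` evaluated at `z`. -/
noncomputable def mvGaussCF {n : ℕ} (m : Fin n → ℝ) (C : Matrix (Fin n) (Fin n) ℝ)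
    (z : Fin n → ℝ) : ℂ :=
  Complex.exp (Complex.I * ((z ⬝ᵥ m : ℝ) : ℂ) - (1 / 2 : ℂ) * ((z ⬝ᵥ C *ᵥ z : ℝ) : ℂ))

/-- A random vector `X` on `(Ω, P)` is multivariate normal `N(m, C)`. -/
def IsMvGaussian {Ω : Type*} [MeasurableSpace Ω] (P : Measure Ω)
    {n : ℕ} (X : Ω → Fin n → ℝ) (m : Fin n → ℝ) (C : Matrix (Fin n) (Fin n) ℝ) : Prop :=
  ∀ z : Fin n → ℝ,
    (∫ ω, Complex.exp (Complex.I * ((z ⬝ᵥ X ω : ℝ) : ℂ)) ∂P) = mvGaussCF m C z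

/-- A random `n × D` matrix `U` is matrix normal `MN(Λ, Ω', Ψ)`, expressed via its
characteristic function `E[exp(i tr(Zᵀ U))] = exp(i tr(Zᵀ Λ) - ½ tr(Ψ Zᵀ Ω' Z))`. -/
def IsMatrixNormal {Ω : Type*} [MeasurableSpace Ω] (P : Measure Ω)
    {n D : ℕ} (U : Ω → Matrix (Fin n) (Fin D) ℝ) (Λ : Matrix (Fin n) (Fin D) ℝ)
    (Ω' : Matrix (Fin n) (Fin n) ℝ) (Ψ : Matrix (Fin D) (Fin D) ℝ) : Prop :=
  ∀ Z : Matrix (Fin n) (Fin D) ℝ,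
    (∫ ω, Complex.exp (Complex.I * (((Zᵀ * U ω).trace : ℝ) : ℂ)) ∂P)
      = Complex.exp (Complex.I * (((Zᵀ * Λ).trace : ℝ) : ℂ)
          - (1 / 2 : ℂ) * (((Ψ * Zᵀ * Ω' * Z).trace : ℝ) : ℂ))

lemma trace_vecMulVec_mul {n D : ℕ} (w : Fin n → ℝ) (γ : Fin D → ℝ)
    (B : Matrix (Fin n) (Fin D) ℝ) :
    ((Matrix.vecMulVec w γ)ᵀ * B).trace = w ⬝ᵥ (B *ᵥ γ) := by
  simp [trace, Matrix.mul_apply, vecMulVec, dotProduct, mulVec, Finset.mul_sum, diag]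
  rw [Finset.sum_comm]
  congr 1; ext i; congr 1; ext j; ring

lemma trace_quad_vecMulVec {n D : ℕ} (w : Fin n → ℝ) (γ : Fin D → ℝ)
    (Ψ : Matrix (Fin D) (Fin D) ℝ) (Ω' : Matrix (Fin n) (Fin n) ℝ) :
    (Ψ * (Matrix.vecMulVec w γ)ᵀ * Ω' * (Matrix.vecMulVec w γ)).trace
      = (γ ⬝ᵥ Ψ *ᵥ γ) * (w ⬝ᵥ Ω' *ᵥ w) := by
  simp only [trace, Matrix.mul_apply, vecMulVec, of_apply, transpose_apply, dotProduct, mulVec,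
    diag_apply, Finset.mul_sum, Finset.sum_mul]
  rw [Finset.sum_comm]
  refine (Finset.sum_congr rfl fun y _ => Finset.sum_comm ..).trans ?_
  rw [Finset.sum_comm]
  refine Finset.sum_congr rfl fun a _ => Finset.sum_congr rfl fun b _ =>
    Finset.sum_congr rfl fun c _ => Finset.sum_congr rfl fun d _ => by ring

lemma indep_integral_mul_complex {Ω : Type*} [MeasurableSpace Ω] {P : Measure Ω}
    {X Y : Ω → ℂ} (h : IndepFun X Y P) (hX : Integrable X P) (hY : Integrable Y P) :
    ∫ ω, X ω * Y ω ∂P = (∫ ω, X ω ∂P) * ∫ ω, Y ω ∂P := by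
  have hXr : Integrable (fun ω => (X ω).re) P := by simpa using hX.re
  have hXi : Integrable (fun ω => (X ω).im) P := by simpa using hX.im
  have hYr : Integrable (fun ω => (Y ω).re) P := by simpa using hY.re
  have hYi : Integrable (fun ω => (Y ω).im) P := by simpa using hY.im
  have hrr : IndepFun (fun ω => (X ω).re) (fun ω => (Y ω).re) P :=
    h.comp Complex.measurable_re Complex.measurable_re
  have hri : IndepFun (fun ω => (X ω).re) (fun ω => (Y ω).im) P :=
    h.comp Complex.measurable_re Complex.measurable_im
  have hir : IndepFun (fun ω => (X ω).im) (fun ω => (Y ω).re) P :=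
    h.comp Complex.measurable_im Complex.measurable_re
  have hii : IndepFun (fun ω => (X ω).im) (fun ω => (Y ω).im) P :=
    h.comp Complex.measurable_im Complex.measurable_im
  have irr : Integrable (fun ω => (X ω).re * (Y ω).re) P := hrr.integrable_mul hXr hYr
  have iri : Integrable (fun ω => (X ω).re * (Y ω).im) P := hri.integrable_mul hXr hYi
  have iir : Integrable (fun ω => (X ω).im * (Y ω).re) P := hir.integrable_mul hXi hYr
  have iii : Integrable (fun ω => (X ω).im * (Y ω).im) P := hii.integrable_mul hXi hYi
  have Err : ∫ ω, (X ω).re * (Y ω).re ∂P = (∫ ω, (X ω).re ∂P) * ∫ ω, (Y ω).re ∂P :=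
    hrr.integral_fun_mul_eq_mul_integral hXr.1 hYr.1
  have Eri : ∫ ω, (X ω).re * (Y ω).im ∂P = (∫ ω, (X ω).re ∂P) * ∫ ω, (Y ω).im ∂P :=
    hri.integral_fun_mul_eq_mul_integral hXr.1 hYi.1
  have Eir : ∫ ω, (X ω).im * (Y ω).re ∂P = (∫ ω, (X ω).im ∂P) * ∫ ω, (Y ω).re ∂P :=
    hir.integral_fun_mul_eq_mul_integral hXi.1 hYr.1
  have Eii : ∫ ω, (X ω).im * (Y ω).im ∂P = (∫ ω, (X ω).im ∂P) * ∫ ω, (Y ω).im ∂P :=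
    hii.integral_fun_mul_eq_mul_integral hXi.1 hYi.1
  have hXY : Integrable (fun ω => X ω * Y ω) P := h.integrable_mul hX hY
  have hx := (integral_re_add_im hX).symm
  have hy := (integral_re_add_im hY).symm
  have hxy := (integral_re_add_im hXY).symm
  simp only [RCLike.re_to_complex, RCLike.im_to_complex, RCLike.I_to_complex] at hx hy hxy
  rw [hxy, hx, hy]
  have hre : ∫ ω, (X ω * Y ω).re ∂P
      = (∫ ω, (X ω).re ∂P) * (∫ ω, (Y ω).re ∂P) - (∫ ω, (X ω).im ∂P) * ∫ ω, (Y ω).im ∂P := by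
    rw [← Err, ← Eii, ← integral_sub irr iii]
    simp [Complex.mul_re]
  have him : ∫ ω, (X ω * Y ω).im ∂P
      = (∫ ω, (X ω).re ∂P) * (∫ ω, (Y ω).im ∂P) + (∫ ω, (X ω).im ∂P) * ∫ ω, (Y ω).re ∂P := by
    rw [← Eri, ← Eir, ← integral_add iri iir]
    simp [Complex.mul_im]
  rw [hre, him]
  push_cast
  ring_nf
  rw [Complex.I_sq]
  ring

/-- Marginalizing the latent homophily: if `U | A, X ~ MN(Λ, Ω', Ψ)` and
`y = M (Uγ + Xβ + ε)` with `M = (I - ρA)⁻¹` and `ε ~ N(0, σ²I)` independent of `U`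
(so that `y | U ~ N(M(Uγ + Xβ), σ² M Mᵀ)`), then marginally
`y ~ N(M(Λγ + Xβ), M (γᵀΨγ • Ω' + σ² I) Mᵀ)`. -/
theorem hane_marginal_distribution {Ω : Type*} [MeasurableSpace Ω]
    (P : Measure Ω) [IsProbabilityMeasure P]
    {n D p : ℕ} (Λ : Matrix (Fin n) (Fin D) ℝ)
    (Ω' : Matrix (Fin n) (Fin n) ℝ) (Ψ : Matrix (Fin D) (Fin D) ℝ)
    (hΩ : Ω'.PosDef) (hΨ : Ψ.PosDef)
    (γ : Fin D → ℝ) (β : Fin p → ℝ) (X : Matrix (Fin n) (Fin p) ℝ)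
    (σ2 : ℝ) (hσ2 : 0 < σ2)
    (A : Matrix (Fin n) (Fin n) ℝ) (ρ : ℝ) (hinv : IsUnit (1 - ρ • A).det)
    (M : Matrix (Fin n) (Fin n) ℝ) (hM : M = (1 - ρ • A)⁻¹)
    (U : Ω → Matrix (Fin n) (Fin D) ℝ) (hU : IsMatrixNormal P U Λ Ω' Ψ)
    (ε : Ω → Fin n → ℝ) (hε : IsMvGaussian P ε 0 (σ2 • (1 : Matrix (Fin n) (Fin n) ℝ)))
    (hindep : IndepFun (fun ω => (fun i j => U ω i j)) ε P)
    (y : Ω → Fin n → ℝ) (hy : ∀ ω, y ω = M *ᵥ (U ω *ᵥ γ + X *ᵥ β + ε ω)) :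
    IsMvGaussian P y (M *ᵥ (Λ *ᵥ γ + X *ᵥ β))
      (M * ((γ ⬝ᵥ Ψ *ᵥ γ) • Ω' + σ2 • (1 : Matrix (Fin n) (Fin n) ℝ)) * Mᵀ) := by
  intro z
  set w : Fin n → ℝ := z ᵥ* M with hwdef
  set Z0 : Matrix (Fin n) (Fin D) ℝ := Matrix.vecMulVec w γ with hZ0
  set f : Ω → ℂ := fun ω => Complex.exp (Complex.I * (((Z0ᵀ * U ω).trace : ℝ) : ℂ)) with hf
  set g : Ω → ℂ := fun ω => Complex.exp (Complex.I * ((w ⬝ᵥ ε ω : ℝ) : ℂ)) with hg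
  -- pointwise rewrite of the integrand
  have hpt : ∀ ω, Complex.exp (Complex.I * ((z ⬝ᵥ y ω : ℝ) : ℂ))
      = Complex.exp (Complex.I * ((w ⬝ᵥ (X *ᵥ β) : ℝ) : ℂ)) * (f ω * g ω) := by
    intro ω
    have h1 : (z ⬝ᵥ y ω : ℝ)
        = (w ⬝ᵥ (X *ᵥ β)) + (((Z0ᵀ * U ω).trace) + (w ⬝ᵥ ε ω)) := by
      rw [hy ω, Matrix.dotProduct_mulVec, ← hwdef, hZ0, trace_vecMulVec_mul]
      simp [dotProduct_add]
      ring
    rw [h1, hf, hg]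
    push_cast
    rw [mul_add, mul_add, Complex.exp_add, Complex.exp_add]
  -- integrability of the two factors
  have hUint : Integrable f P := by
    by_contra hc
    have h2 := hU Z0
    rw [show (∫ ω, Complex.exp (Complex.I * (((Z0ᵀ * U ω).trace : ℝ) : ℂ)) ∂P) = ∫ ω, f ω ∂P
      from rfl, integral_undef hc] at h2
    exact (Complex.exp_ne_zero _) h2.symm
  have hεint : Integrable g P := by
    by_contra hc
    have h2 := hε w
    rw [show (∫ ω, Complex.exp (Complex.I * ((w ⬝ᵥ ε ω : ℝ) : ℂ)) ∂P) = ∫ ω, g ω ∂P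
      from rfl, integral_undef hc] at h2
    exact (Complex.exp_ne_zero _) (h2.trans (by unfold mvGaussCF; rfl)).symm
  -- independence of the two factors
  have hφ : Measurable (fun V : Fin n → Fin D → ℝ =>
      Complex.exp (Complex.I * ((∑ j : Fin D, ∑ i : Fin n, Z0 i j * V i j : ℝ) : ℂ))) := by
    have htr : Measurable (fun V : Fin n → Fin D → ℝ =>
        ∑ j : Fin D, ∑ i : Fin n, Z0 i j * V i j) :=
      Finset.measurable_sum _ fun j _ => Finset.measurable_sum _ fun i _ =>
        measurable_const.mul ((measurable_pi_apply _).comp (measurable_pi_apply _))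
    exact Complex.measurable_exp.comp
      ((Complex.measurable_ofReal.comp htr).const_mul Complex.I)
  have hfeq : f = fun ω =>
      Complex.exp (Complex.I * ((∑ j : Fin D, ∑ i : Fin n, Z0 i j * U ω i j : ℝ) : ℂ)) := by
    funext ω
    have : (Z0ᵀ * U ω).trace = ∑ j : Fin D, ∑ i : Fin n, Z0 i j * U ω i j := by
      simp [trace, Matrix.mul_apply, diag]
    show Complex.exp (Complex.I * (((Z0ᵀ * U ω).trace : ℝ) : ℂ)) = _
    rw [this]
  have hψ : Measurable (fun e : Fin n → ℝ =>
      Complex.exp (Complex.I * ((w ⬝ᵥ e : ℝ) : ℂ))) := by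
    have hd : Measurable (fun e : Fin n → ℝ => w ⬝ᵥ e) := by
      simp only [dotProduct]
      exact Finset.measurable_sum _ fun i _ => measurable_const.mul (measurable_pi_apply _)
    exact Complex.measurable_exp.comp
      ((Complex.measurable_ofReal.comp hd).const_mul Complex.I)
  have hind : IndepFun f g P := by
    rw [hfeq]
    exact hindep.comp hφ hψ
  -- compute
  calc (∫ ω, Complex.exp (Complex.I * ((z ⬝ᵥ y ω : ℝ) : ℂ)) ∂P)
      = ∫ ω, Complex.exp (Complex.I * ((w ⬝ᵥ (X *ᵥ β) : ℝ) : ℂ)) * (f ω * g ω) ∂P := by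
        exact integral_congr_ae (Filter.Eventually.of_forall hpt)
    _ = Complex.exp (Complex.I * ((w ⬝ᵥ (X *ᵥ β) : ℝ) : ℂ)) * ∫ ω, f ω * g ω ∂P :=
        integral_const_mul _ _
    _ = Complex.exp (Complex.I * ((w ⬝ᵥ (X *ᵥ β) : ℝ) : ℂ))
          * ((∫ ω, f ω ∂P) * ∫ ω, g ω ∂P) := by
        rw [indep_integral_mul_complex hind hUint hεint]
    _ = mvGaussCF (M *ᵥ (Λ *ᵥ γ + X *ᵥ β))
          (M * ((γ ⬝ᵥ Ψ *ᵥ γ) • Ω' + σ2 • (1 : Matrix (Fin n) (Fin n) ℝ)) * Mᵀ) z := by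
        rw [hf, hg]
        rw [hU Z0, hε w]
        unfold mvGaussCF
        rw [hZ0, trace_vecMulVec_mul, trace_quad_vecMulVec]
        have e1 : z ⬝ᵥ M *ᵥ (Λ *ᵥ γ + X *ᵥ β) = w ⬝ᵥ (Λ *ᵥ γ) + w ⬝ᵥ (X *ᵥ β) := by
          rw [Matrix.dotProduct_mulVec, ← hwdef, dotProduct_add]
        have e2 : z ⬝ᵥ (M * ((γ ⬝ᵥ Ψ *ᵥ γ) • Ω' + σ2 • (1 : Matrix (Fin n) (Fin n) ℝ)) * Mᵀ) *ᵥ z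
            = (γ ⬝ᵥ Ψ *ᵥ γ) * (w ⬝ᵥ Ω' *ᵥ w) + σ2 * (w ⬝ᵥ w) := by
          rw [← Matrix.mulVec_mulVec, ← Matrix.mulVec_mulVec, Matrix.mulVec_transpose,
            Matrix.dotProduct_mulVec z M, ← hwdef]
          rw [Matrix.add_mulVec, Matrix.smul_mulVec, Matrix.smul_mulVec,
            Matrix.one_mulVec, dotProduct_add, dotProduct_smul,
            dotProduct_smul]
          simp [smul_eq_mul]
        have e3 : w ⬝ᵥ (σ2 • (1 : Matrix (Fin n) (Fin n) ℝ)) *ᵥ w = σ2 * (w ⬝ᵥ w) := by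
          rw [Matrix.smul_mulVec, Matrix.one_mulVec, dotProduct_smul]
          simp [smul_eq_mul]
        rw [e1, e2, e3]
        rw [← Complex.exp_add, ← Complex.exp_add]
        congr 1
        have : w ⬝ᵥ (0 : Fin n → ℝ) = 0 := by simp
        rw [this]
        push_cast
        ring
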